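/- Let {A_n}_n and {Z_n}_n be matrix-sequences with A_n, Z_n of size d_n, and let ψ : D → ℂ be a measurable function on a measurable set D ⊂ ℝ^t with 0 < μ_t(D) < ∞. If {A_n}_n ~σ ψ and {Z_n}_n ~σ 0, then {A_n + Z_n}_n ~σ ψ. -/

import Mathlib

open MeasureTheory Filter Topology

/-- The singular values of a square complex matrix `A`, i.e. the nonnegative square
roots of the eigenvalues of the Hermitian matrix `Aᴴ * A`. -/
noncomputable def singVals {m : Type*} [Fintype m] [DecidableEq m]
    (A : Matrix m m ℂ) : m → ℝ :=
  fun i => Real.sqrt ((Matrix.isHermitian_conjTranspose_mul_self A).eigenvalues i)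

/-- `{A n}ₙ ~σ ψ`: the matrix-sequence `A` (with `A n` of size `d n`) has singular value
distribution `ψ : D → ℂ`, `D ⊆ ℝᵗ`. -/
def HasSingValDistr (d : ℕ → ℕ) (A : ∀ n, Matrix (Fin (d n)) (Fin (d n)) ℂ)
    {t : ℕ} (D : Set (Fin t → ℝ)) (ψ : (Fin t → ℝ) → ℂ) : Prop :=
  ∀ F : ℝ → ℂ, Continuous F → HasCompactSupport F →
    Tendsto (fun n => (d n : ℂ)⁻¹ * ∑ i, F (singVals (A n) i))
      atTop (𝓝 ((volume D).toReal⁻¹ • ∫ x in D, F ‖ψ x‖))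

/-- `{A n}ₙ ~σ 0`: the matrix-sequence `A` is zero-distributed. -/
def ZeroDistr (d : ℕ → ℕ) (A : ∀ n, Matrix (Fin (d n)) (Fin (d n)) ℂ) : Prop :=
  ∀ F : ℝ → ℂ, Continuous F → HasCompactSupport F →
    Tendsto (fun n => (d n : ℂ)⁻¹ * ∑ i, F (singVals (A n) i)) atTop (𝓝 (F 0))


section AuxLinAlg

open Matrix Finset

variable {m : ℕ}

variable {m : ℕ}

lemma conj_mul_smul_re (z : ℂ) (t : ℝ) : ((starRingEnd ℂ) z * ((t:ℂ) * z)).re = t * ‖z‖^2 := by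
  rw [show (starRingEnd ℂ) z * ((t:ℂ) * z) = (t:ℂ) * ((‖z‖:ℂ)) ^ 2 by
    rw [show ((‖z‖:ℂ))^2 = (starRingEnd ℂ) z * z by
      rw [← Complex.normSq_eq_conj_mul_self]; simp [Complex.normSq_eq_norm_sq]]
    ring]
  rw [← Complex.ofReal_pow, ← Complex.ofReal_mul, Complex.ofReal_re]

lemma toEL_eigen (H : Matrix (Fin m) (Fin m) ℂ) (hH : H.IsHermitian) (j : Fin m) :
    Matrix.toEuclideanLin H (hH.eigenvectorBasis j) = (hH.eigenvalues j : ℂ) • hH.eigenvectorBasis j := by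
  have h := hH.mulVec_eigenvectorBasis j
  apply (WithLp.equiv 2 (Fin m → ℂ)).injective
  simpa [Matrix.toEuclideanLin_apply] using congrArg id h

lemma quad_repr (H : Matrix (Fin m) (Fin m) ℂ) (hH : H.IsHermitian)
    (x : EuclideanSpace ℂ (Fin m)) :
    Complex.re (inner ℂ x (Matrix.toEuclideanLin H x)) =
      ∑ i, hH.eigenvalues i * ‖(inner ℂ (hH.eigenvectorBasis i) x : ℂ)‖ ^ 2 := by
  set b := hH.eigenvectorBasis
  have hsym : (Matrix.toEuclideanLin H).IsSymmetric := Matrix.isHermitian_iff_isSymmetric.mp hH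
  have h1 : (inner ℂ x (Matrix.toEuclideanLin H x) : ℂ)
      = ∑ i, (inner ℂ x (b i) : ℂ) * inner ℂ (b i) (Matrix.toEuclideanLin H x) :=
    (b.sum_inner_mul_inner x _).symm
  have h2 : ∀ i, (inner ℂ (b i) (Matrix.toEuclideanLin H x) : ℂ)
      = (hH.eigenvalues i : ℂ) * inner ℂ (b i) x := by
    intro i
    rw [← hsym (b i) x, toEL_eigen H hH i, inner_smul_left]
    simp [Complex.conj_ofReal, b]
  rw [h1]
  simp only [h2]
  rw [Complex.re_sum]
  congr 1; ext i
  rw [show (inner ℂ x (b i) : ℂ) = starRingEnd ℂ (inner ℂ (b i) x) from (inner_conj_symm _ _).symm]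
  exact conj_mul_smul_re _ _

lemma norm_repr (x : EuclideanSpace ℂ (Fin m))
    (b : OrthonormalBasis (Fin m) ℂ (EuclideanSpace ℂ (Fin m))) :
    ‖x‖ ^ 2 = ∑ i, ‖(inner ℂ (b i) x : ℂ)‖ ^ 2 := by
  have h1 : (inner ℂ x x : ℂ) = ∑ i, (inner ℂ x (b i) : ℂ) * inner ℂ (b i) x :=
    (b.sum_inner_mul_inner x x).symm
  have h0 : ‖x‖^2 = Complex.re (inner ℂ x x) := by
    have := @inner_self_eq_norm_sq ℂ _ _ _ _ x
    simpa [RCLike.re] using this.symm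
  rw [h0, h1, Complex.re_sum]
  congr 1; ext i
  rw [show (inner ℂ x (b i) : ℂ) = starRingEnd ℂ (inner ℂ (b i) x) from (inner_conj_symm _ _).symm]
  simpa using conj_mul_smul_re (inner ℂ (b i) x) 1

lemma inner_eq_zero_of_mem_span (b : OrthonormalBasis (Fin m) ℂ (EuclideanSpace ℂ (Fin m)))
    (S : Set (Fin m)) (x : EuclideanSpace ℂ (Fin m))
    (hx : x ∈ Submodule.span ℂ (b '' S)) (j : Fin m) (hj : j ∉ S) :
    (inner ℂ (b j) x : ℂ) = 0 := by
  induction hx using Submodule.span_induction with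
  | mem y hy =>
    obtain ⟨i, hiS, rfl⟩ := hy
    have : i ≠ j := fun h => hj (h ▸ hiS)
    exact b.orthonormal.2 (Ne.symm this)
  | zero => exact inner_zero_right _
  | add y z _ _ hy hz => rw [inner_add_right, hy, hz, add_zero]
  | smul c y _ hy => rw [inner_smul_right, hy, mul_zero]

lemma finrank_span_image (b : OrthonormalBasis (Fin m) ℂ (EuclideanSpace ℂ (Fin m)))
    (S : Finset (Fin m)) :
    Module.finrank ℂ (Submodule.span ℂ (b '' (S : Set (Fin m)))) = S.card := by
  have hli : LinearIndependent ℂ (fun i : (S : Set (Fin m)) => b i) :=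
    (b.orthonormal.linearIndependent).comp _ Subtype.coe_injective
  have : (b '' (S : Set (Fin m))) = Set.range (fun i : (S : Set (Fin m)) => b i) := by
    rw [← Set.image_eq_range]
  rw [this, finrank_span_eq_card hli]
  simp


lemma norm_sq_toEL (M : Matrix (Fin m) (Fin m) ℂ) (x : EuclideanSpace ℂ (Fin m)) :
    ‖Matrix.toEuclideanLin M x‖ ^ 2 = Complex.re (inner ℂ x (Matrix.toEuclideanLin (Mᴴ * M) x)) := by
  have hc : Matrix.toEuclideanLin (Mᴴ * M) x
      = Matrix.toEuclideanLin Mᴴ (Matrix.toEuclideanLin M x) := by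
    apply (WithLp.equiv 2 (Fin m → ℂ)).injective
    simp [Matrix.toEuclideanLin_apply, ← Matrix.mulVec_mulVec]
  rw [hc, Matrix.toEuclideanLin_conjTranspose_eq_adjoint, LinearMap.adjoint_inner_right]
  have := @inner_self_eq_norm_sq ℂ _ _ _ _ (Matrix.toEuclideanLin M x)
  simpa [RCLike.re] using this.symm

lemma sq_le_imp_le {u v : ℝ} (hv : 0 ≤ v) (h : u^2 ≤ v^2) : u ≤ v := by nlinarith

/-- On the span of eigenvectors with small eigenvalues, `‖Mx‖ ≤ a‖x‖`. -/
lemma norm_toEL_le (M : Matrix (Fin m) (Fin m) ℂ) (a : ℝ) (ha : 0 ≤ a)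
    (x : EuclideanSpace ℂ (Fin m))
    (hx : x ∈ Submodule.span ℂ ((Matrix.isHermitian_conjTranspose_mul_self M).eigenvectorBasis ''
      ((univ.filter fun i => (Matrix.isHermitian_conjTranspose_mul_self M).eigenvalues i ≤ a^2) : Finset (Fin m)))) :
    ‖Matrix.toEuclideanLin M x‖ ≤ a * ‖x‖ := by
  set hM := Matrix.isHermitian_conjTranspose_mul_self M
  set b := hM.eigenvectorBasis
  set S : Finset (Fin m) := univ.filter fun i => hM.eigenvalues i ≤ a^2
  apply sq_le_imp_le (mul_nonneg ha (norm_nonneg x))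
  rw [mul_pow, norm_sq_toEL, quad_repr _ hM, norm_repr x b]
  have hz : ∀ i ∈ univ, i ∉ S → hM.eigenvalues i * ‖(inner ℂ (b i) x : ℂ)‖ ^ 2 = 0 := by
    intro i _ hiS
    rw [inner_eq_zero_of_mem_span b _ x hx i (by simpa using hiS)]
    simp
  have hz' : ∀ i ∈ univ, i ∉ S → ‖(inner ℂ (b i) x : ℂ)‖ ^ 2 = 0 := by
    intro i _ hiS
    rw [inner_eq_zero_of_mem_span b _ x hx i (by simpa using hiS)]
    simp
  rw [← Finset.sum_subset (Finset.subset_univ S) hz, ← Finset.sum_subset (Finset.subset_univ S) hz',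
    Finset.mul_sum]
  apply Finset.sum_le_sum
  intro i hi
  have : hM.eigenvalues i ≤ a^2 := by simpa [S] using hi
  exact mul_le_mul_of_nonneg_right this (by positivity)

/-- On the span of eigenvectors with large eigenvalues, `c‖x‖ < ‖Mx‖` for `x ≠ 0`. -/
lemma lt_norm_toEL (M : Matrix (Fin m) (Fin m) ℂ) (c : ℝ) (hc : 0 ≤ c)
    (x : EuclideanSpace ℂ (Fin m)) (hx0 : x ≠ 0)
    (hx : x ∈ Submodule.span ℂ ((Matrix.isHermitian_conjTranspose_mul_self M).eigenvectorBasis ''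
      ((univ.filter fun i => c^2 < (Matrix.isHermitian_conjTranspose_mul_self M).eigenvalues i) : Finset (Fin m)))) :
    c * ‖x‖ < ‖Matrix.toEuclideanLin M x‖ := by
  set hM := Matrix.isHermitian_conjTranspose_mul_self M
  set b := hM.eigenvectorBasis
  set S : Finset (Fin m) := univ.filter fun i => c^2 < hM.eigenvalues i
  have key : (c * ‖x‖)^2 < ‖Matrix.toEuclideanLin M x‖^2 := by
    rw [mul_pow, norm_sq_toEL, quad_repr _ hM, norm_repr x b]
    have hz : ∀ i ∈ univ, i ∉ S → hM.eigenvalues i * ‖(inner ℂ (b i) x : ℂ)‖ ^ 2 = 0 := by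
      intro i _ hiS
      rw [inner_eq_zero_of_mem_span b _ x hx i (by simpa using hiS)]; simp
    have hz' : ∀ i ∈ univ, i ∉ S → ‖(inner ℂ (b i) x : ℂ)‖ ^ 2 = 0 := by
      intro i _ hiS
      rw [inner_eq_zero_of_mem_span b _ x hx i (by simpa using hiS)]; simp
    rw [← Finset.sum_subset (Finset.subset_univ S) hz,
      ← Finset.sum_subset (Finset.subset_univ S) hz', Finset.mul_sum]
    have hxpos : 0 < ‖x‖^2 := by
      have := norm_pos_iff.mpr hx0
      positivity
    have hsum : ‖x‖^2 = ∑ i ∈ S, ‖(inner ℂ (b i) x : ℂ)‖ ^ 2 := by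
      rw [norm_repr x b, ← Finset.sum_subset (Finset.subset_univ S) hz']
    have hexists : ∃ i ∈ S, ‖(inner ℂ (b i) x : ℂ)‖ ^ 2 ≠ 0 := by
      by_contra hall
      push_neg at hall
      have h0 : ∑ i ∈ S, ‖(inner ℂ (b i) x : ℂ)‖ ^ 2 = 0 := Finset.sum_eq_zero hall
      rw [hsum, h0] at hxpos
      exact lt_irrefl _ hxpos
    obtain ⟨i₀, hi₀S, hi₀⟩ := hexists
    apply Finset.sum_lt_sum
    · intro i hi
      have : c^2 < hM.eigenvalues i := by simpa [S] using hi
      exact mul_le_mul_of_nonneg_right this.le (by positivity)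
    · refine ⟨i₀, hi₀S, ?_⟩
      have h1 : c^2 < hM.eigenvalues i₀ := by simpa [S] using hi₀S
      have h2 : 0 < ‖(inner ℂ (b i₀) x : ℂ)‖ ^ 2 := lt_of_le_of_ne (by positivity) (Ne.symm hi₀)
      exact mul_lt_mul_of_pos_right h1 h2
  nlinarith [norm_nonneg (Matrix.toEuclideanLin M x), mul_nonneg hc (norm_nonneg x)]

/-- Key: subadditivity of singular value counting. -/
lemma sv_count_add (A B : Matrix (Fin m) (Fin m) ℂ) (a b : ℝ) (ha : 0 ≤ a) (hb : 0 ≤ b) :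
    (univ.filter fun i => a + b < singVals (A + B) i).card ≤
      (univ.filter fun i => a < singVals A i).card +
      (univ.filter fun i => b < singVals B i).card := by
  have hev : ∀ (M : Matrix (Fin m) (Fin m) ℂ) (c : ℝ), 0 ≤ c →
      (univ.filter fun i => c < singVals M i)
        = (univ.filter fun i => c^2 < (Matrix.isHermitian_conjTranspose_mul_self M).eigenvalues i) := by
    intro M c hc
    ext i
    simp [singVals, Real.lt_sqrt hc]
  by_contra hlt
  push_neg at hlt
  set hA := Matrix.isHermitian_conjTranspose_mul_self A
  set hB := Matrix.isHermitian_conjTranspose_mul_self B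
  set hC := Matrix.isHermitian_conjTranspose_mul_self (A + B)
  set SA : Finset (Fin m) := univ.filter fun i => hA.eigenvalues i ≤ a^2 with hSA
  set SB : Finset (Fin m) := univ.filter fun i => hB.eigenvalues i ≤ b^2 with hSB
  set SC : Finset (Fin m) := univ.filter fun i => (a+b)^2 < hC.eigenvalues i with hSC
  set U := Submodule.span ℂ (hA.eigenvectorBasis '' (SA : Set (Fin m)))
  set V := Submodule.span ℂ (hB.eigenvectorBasis '' (SB : Set (Fin m)))
  set W := Submodule.span ℂ (hC.eigenvectorBasis '' (SC : Set (Fin m)))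
  have hdimU : Module.finrank ℂ U = SA.card := finrank_span_image _ _
  have hdimV : Module.finrank ℂ V = SB.card := finrank_span_image _ _
  have hdimW : Module.finrank ℂ W = SC.card := finrank_span_image _ _
  have hcardA : SA.card + (univ.filter fun i => a < singVals A i).card = m := by
    rw [hev A a ha]
    have := Finset.card_filter_add_card_filter_not
      (s := (univ : Finset (Fin m))) (p := fun i => hA.eigenvalues i ≤ a^2)
    simp only [not_le] at this
    simpa [hSA] using this
  have hcardB : SB.card + (univ.filter fun i => b < singVals B i).card = m := by
    rw [hev B b hb]
    have := Finset.card_filter_add_card_filter_not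
      (s := (univ : Finset (Fin m))) (p := fun i => hB.eigenvalues i ≤ b^2)
    simp only [not_le] at this
    simpa [hSB] using this
  have hcardC : (univ.filter fun i => a + b < singVals (A+B) i).card = SC.card := by
    rw [hev (A+B) (a+b) (by linarith)]
  have hE : Module.finrank ℂ (EuclideanSpace ℂ (Fin m)) = m := by
    simp [finrank_euclideanSpace]
  -- dimension counting
  have hUV : Module.finrank ℂ (U ⊔ V : Submodule ℂ (EuclideanSpace ℂ (Fin m)))
      + Module.finrank ℂ (U ⊓ V : Submodule ℂ (EuclideanSpace ℂ (Fin m)))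
      = Module.finrank ℂ U + Module.finrank ℂ V :=
    Submodule.finrank_sup_add_finrank_inf_eq U V
  have hle1 : Module.finrank ℂ (U ⊔ V : Submodule ℂ (EuclideanSpace ℂ (Fin m))) ≤ m :=
    le_trans (Submodule.finrank_le _) (le_of_eq hE)
  have hWP : Module.finrank ℂ (W ⊔ (U ⊓ V) : Submodule ℂ (EuclideanSpace ℂ (Fin m)))
      + Module.finrank ℂ (W ⊓ (U ⊓ V) : Submodule ℂ (EuclideanSpace ℂ (Fin m)))
      = Module.finrank ℂ W + Module.finrank ℂ (U ⊓ V : Submodule ℂ (EuclideanSpace ℂ (Fin m))) :=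
    Submodule.finrank_sup_add_finrank_inf_eq W (U ⊓ V)
  have hle2 : Module.finrank ℂ (W ⊔ (U ⊓ V) : Submodule ℂ (EuclideanSpace ℂ (Fin m))) ≤ m :=
    le_trans (Submodule.finrank_le _) (le_of_eq hE)
  have hpos : 0 < Module.finrank ℂ (W ⊓ (U ⊓ V) : Submodule ℂ (EuclideanSpace ℂ (Fin m))) := by
    omega
  have : Nontrivial (W ⊓ (U ⊓ V) : Submodule ℂ (EuclideanSpace ℂ (Fin m))) :=
    Module.finrank_pos_iff.mp hpos
  obtain ⟨x, hx0⟩ := exists_ne (0 : (W ⊓ (U ⊓ V) : Submodule ℂ (EuclideanSpace ℂ (Fin m))))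
  have hxW : (x : EuclideanSpace ℂ (Fin m)) ∈ W := x.2.1
  have hxU : (x : EuclideanSpace ℂ (Fin m)) ∈ U := x.2.2.1
  have hxV : (x : EuclideanSpace ℂ (Fin m)) ∈ V := x.2.2.2
  have hxne : (x : EuclideanSpace ℂ (Fin m)) ≠ 0 := fun h => hx0 (Subtype.ext h)
  have h1 : ‖Matrix.toEuclideanLin A (x : EuclideanSpace ℂ (Fin m))‖ ≤ a * ‖(x : EuclideanSpace ℂ (Fin m))‖ :=
    norm_toEL_le A a ha _ hxU
  have h2 : ‖Matrix.toEuclideanLin B (x : EuclideanSpace ℂ (Fin m))‖ ≤ b * ‖(x : EuclideanSpace ℂ (Fin m))‖ :=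
    norm_toEL_le B b hb _ hxV
  have h3 : (a + b) * ‖(x : EuclideanSpace ℂ (Fin m))‖
      < ‖Matrix.toEuclideanLin (A + B) (x : EuclideanSpace ℂ (Fin m))‖ :=
    lt_norm_toEL (A + B) (a + b) (by linarith) _ hxne hxW
  have h4 : Matrix.toEuclideanLin (A + B) (x : EuclideanSpace ℂ (Fin m))
      = Matrix.toEuclideanLin A (x : EuclideanSpace ℂ (Fin m))
        + Matrix.toEuclideanLin B (x : EuclideanSpace ℂ (Fin m)) := by
    rw [map_add Matrix.toEuclideanLin A B]; rfl
  have h5 := norm_add_le (Matrix.toEuclideanLin A (x : EuclideanSpace ℂ (Fin m)))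
    (Matrix.toEuclideanLin B (x : EuclideanSpace ℂ (Fin m)))
  rw [← h4] at h5
  linarith

end AuxLinAlg

open Finset

lemma card_filter_perm {n : ℕ} (σ : Equiv.Perm (Fin n)) (p : Fin n → Prop) [DecidablePred p] :
    (univ.filter fun k => p (σ k)).card = (univ.filter p).card := by
  apply Finset.card_bij (fun k _ => σ k)
  · intro k hk; simp only [mem_filter, mem_univ, true_and] at hk ⊢; exact hk
  · intro k1 _ k2 _ h; exact σ.injective h
  · intro k hk
    refine ⟨σ.symm k, ?_, by simp⟩
    simp only [mem_filter, mem_univ, true_and] at hk ⊢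
    simpa using hk

lemma antitone_count_le {n : ℕ} (g : Fin n → ℝ) (hg : Antitone g) (i : Fin n) :
    (univ.filter fun k => g i < g k).card ≤ (i : ℕ) := by
  have hsub : (univ.filter fun k => g i < g k) ⊆ univ.filter fun k => k < i := by
    intro k hk
    simp only [mem_filter, mem_univ, true_and] at hk ⊢
    by_contra h
    push_neg at h
    exact absurd (hg h) (not_le.mpr hk)
  calc (univ.filter fun k => g i < g k).card ≤ (univ.filter fun k => k < i).card :=
        Finset.card_le_card hsub
    _ = (Finset.Iio i).card := by congr 1; ext k; simp
    _ = (i : ℕ) := Fin.card_Iio i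

lemma antitone_le_of_count {n : ℕ} (g : Fin n → ℝ) (hg : Antitone g) (c : ℝ) (k : ℕ)
    (h : (univ.filter fun j => c < g j).card ≤ k) (j : Fin n) (hj : k ≤ (j : ℕ)) :
    g j ≤ c := by
  by_contra hc
  push_neg at hc
  have hsub : Finset.Iic j ⊆ univ.filter fun l => c < g l := by
    intro l hl
    simp only [Finset.mem_Iic] at hl
    simp only [mem_filter, mem_univ, true_and]
    exact lt_of_lt_of_le hc (hg hl)
  have := Finset.card_le_card hsub
  rw [Fin.card_Iic] at this
  omega

lemma telescope_sum (G : ℕ → ℝ) (K : ℝ) (h0 : ∀ j, 0 ≤ G j) (hK : ∀ j, G j ≤ K)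
    (N s : ℕ) : ∑ j ∈ Finset.range N, (G j - G (j + s)) ≤ s * K := by
  have hKnn : 0 ≤ K := le_trans (h0 0) (hK 0)
  rw [Finset.sum_sub_distrib]
  have hshift : ∑ j ∈ Finset.range N, G (j + s) = ∑ j ∈ Finset.Ico s (N + s), G j := by
    rw [Finset.sum_Ico_eq_sum_range]
    simp [add_comm]
  rw [hshift]
  rcases le_or_gt s N with h | h
  · have e1 : ∑ j ∈ Finset.range N, G j
        = ∑ j ∈ Finset.Ico 0 s, G j + ∑ j ∈ Finset.Ico s N, G j := by
      rw [Finset.sum_Ico_consecutive _ (Nat.zero_le s) h, Finset.range_eq_Ico]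
    have e2 : ∑ j ∈ Finset.Ico s (N + s), G j
        = ∑ j ∈ Finset.Ico s N, G j + ∑ j ∈ Finset.Ico N (N + s), G j := by
      rw [Finset.sum_Ico_consecutive _ h (Nat.le_add_right N s)]
    have b1 : ∑ j ∈ Finset.Ico 0 s, G j ≤ s * K := by
      calc ∑ j ∈ Finset.Ico 0 s, G j ≤ ∑ _j ∈ Finset.Ico 0 s, K :=
            Finset.sum_le_sum fun j _ => hK j
        _ = s * K := by simp
    have b2 : 0 ≤ ∑ j ∈ Finset.Ico N (N + s), G j := Finset.sum_nonneg fun j _ => h0 j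
    linarith
  · have b1 : ∑ j ∈ Finset.range N, G j ≤ N * K := by
      calc ∑ j ∈ Finset.range N, G j ≤ ∑ _j ∈ Finset.range N, K :=
            Finset.sum_le_sum fun j _ => hK j
        _ = N * K := by simp
    have b2 : 0 ≤ ∑ j ∈ Finset.Ico s (N + s), G j := Finset.sum_nonneg fun j _ => h0 j
    have : (N : ℝ) * K ≤ s * K := by
      apply mul_le_mul_of_nonneg_right _ hKnn
      exact_mod_cast h.le
    linarith

lemma sorted_shift {n : ℕ} (gv gw : Fin n → ℝ) (hgv : Antitone gv) (hgw : Antitone gw)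
    (hw0 : ∀ i, 0 ≤ gw i) (ε : ℝ) (r : ℕ)
    (hcount : ∀ c : ℝ, 0 ≤ c →
      (univ.filter fun k => c + ε < gv k).card ≤ (univ.filter fun k => c < gw k).card + r)
    (i j : Fin n) (hij : (i : ℕ) + r ≤ (j : ℕ)) : gv j ≤ gw i + ε := by
  have h1 : (univ.filter fun k => gw i < gw k).card ≤ (i : ℕ) := antitone_count_le gw hgw i
  have h2 := hcount (gw i) (hw0 i)
  exact antitone_le_of_count gv hgv (gw i + ε) ((i : ℕ) + r) (by omega) j (by omega)

lemma key_estimate (dd r : ℕ) (v w : Fin dd → ℝ) (hv : ∀ i, 0 ≤ v i) (hw : ∀ i, 0 ≤ w i)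
    (ε K η δ C : ℝ) (hε : 0 < ε) (hK : 0 < K) (hη : 0 < η) (hδ : 0 ≤ δ) (hC : 0 ≤ C)
    (F : ℝ → ℂ)
    (hFK : ∀ x : ℝ, K ≤ x → F x = 0)
    (hFC : ∀ x, ‖F x‖ ≤ C)
    (hmod : ∀ x y : ℝ, |x - y| ≤ 2*ε + η → ‖F x - F y‖ ≤ δ)
    (hcount1 : ∀ c : ℝ, 0 ≤ c →
      (univ.filter fun i => c + ε < v i).card ≤ (univ.filter fun i => c < w i).card + r)
    (hcount2 : ∀ c : ℝ, 0 ≤ c →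
      (univ.filter fun i => c + ε < w i).card ≤ (univ.filter fun i => c < v i).card + r) :
    ‖∑ i, F (v i) - ∑ i, F (w i)‖ ≤ dd * δ + 2*C*(2*r + 2*r*K/η) := by
  classical
  set σv := Tuple.sort (fun i => -(v i)) with hσv
  set σw := Tuple.sort (fun i => -(w i)) with hσw
  set gv : Fin dd → ℝ := fun i => v (σv i) with hgvdef
  set gw : Fin dd → ℝ := fun i => w (σw i) with hgwdef
  have hgv : Antitone gv := by
    intro i j hij
    have := Tuple.monotone_sort (fun i => -(v i)) hij
    simpa [hgvdef] using this
  have hgw : Antitone gw := by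
    intro i j hij
    have := Tuple.monotone_sort (fun i => -(w i)) hij
    simpa [hgwdef] using this
  have hgv0 : ∀ i, 0 ≤ gv i := fun i => hv _
  have hgw0 : ∀ i, 0 ≤ gw i := fun i => hw _
  have hsumv : ∑ i, F (v i) = ∑ i, F (gv i) := (Equiv.sum_comp σv (fun i => F (v i))).symm
  have hsumw : ∑ i, F (w i) = ∑ i, F (gw i) := (Equiv.sum_comp σw (fun i => F (w i))).symm
  have hcount1' : ∀ c : ℝ, 0 ≤ c →
      (univ.filter fun k => c + ε < gv k).card ≤ (univ.filter fun k => c < gw k).card + r := by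
    intro c hc
    rw [show (univ.filter fun k => c + ε < gv k) = (univ.filter fun k => (fun k => c + ε < v k) (σv k)) from rfl,
      card_filter_perm σv (fun k => c + ε < v k),
      show (univ.filter fun k => c < gw k) = (univ.filter fun k => (fun k => c < w k) (σw k)) from rfl,
      card_filter_perm σw (fun k => c < w k)]
    exact hcount1 c hc
  have hcount2' : ∀ c : ℝ, 0 ≤ c →
      (univ.filter fun k => c + ε < gw k).card ≤ (univ.filter fun k => c < gv k).card + r := by
    intro c hc
    rw [show (univ.filter fun k => c + ε < gw k) = (univ.filter fun k => (fun k => c + ε < w k) (σw k)) from rfl,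
      card_filter_perm σw (fun k => c + ε < w k),
      show (univ.filter fun k => c < gv k) = (univ.filter fun k => (fun k => c < v k) (σv k)) from rfl,
      card_filter_perm σv (fun k => c < v k)]
    exact hcount2 c hc
  have hFtrunc : ∀ x : ℝ, F (min x K) = F x := by
    intro x
    rcases le_total x K with h | h
    · rw [min_eq_left h]
    · rw [min_eq_right h, hFK x h, hFK K le_rfl]
  set G : ℕ → ℝ := fun j => if h : j < dd then min (gw ⟨j, h⟩) K else 0 with hGdef
  have hG0 : ∀ j, 0 ≤ G j := by
    intro j
    simp only [hGdef]
    split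
    · exact le_min (hgw0 _) hK.le
    · exact le_rfl
  have hGK : ∀ j, G j ≤ K := by
    intro j
    simp only [hGdef]
    split
    · exact min_le_right _ _
    · exact hK.le
  have hGanti : Antitone G := by
    intro j k hjk
    simp only [hGdef]
    split <;> split
    · exact min_le_min (hgw (by exact_mod_cast hjk)) le_rfl
    · omega
    · exact le_min (hgw0 _) hK.le
    · exact le_rfl
  have hGeq : ∀ (i : Fin dd), G (i : ℕ) = min (gw i) K := by
    intro i
    simp only [hGdef, dif_pos i.isLt, Fin.eta]
  -- per-index estimate
  set BadP : Fin dd → Prop :=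
    fun i => (i : ℕ) < r ∨ dd ≤ (i : ℕ) + r ∨ η < G ((i : ℕ) - r) - G ((i : ℕ) + r) with hBadP
  have key : ∀ i, ‖F (gv i) - F (gw i)‖ ≤ δ + (if BadP i then 2*C else 0) := by
    intro i
    by_cases hbad : BadP i
    · rw [if_pos hbad]
      have := norm_sub_le (F (gv i)) (F (gw i))
      have h1 := hFC (gv i); have h2 := hFC (gw i)
      linarith
    · rw [if_neg hbad, add_zero]
      simp only [hBadP, not_or, not_lt, not_le] at hbad
      obtain ⟨hri, hird, hgap⟩ := hbad
      set im : Fin dd := ⟨(i : ℕ) - r, by omega⟩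
      set ip : Fin dd := ⟨(i : ℕ) + r, by omega⟩
      have hup : gv i ≤ gw im + ε :=
        sorted_shift gv gw hgv hgw hgw0 ε r hcount1' im i (by simp [im]; omega)
      have hdn : gw ip ≤ gv i + ε :=
        sorted_shift gw gv hgw hgv hgv0 ε r hcount2' i ip (by simp [ip])
      have hGm : G ((i : ℕ) - r) = min (gw im) K := hGeq im
      have hGp : G ((i : ℕ) + r) = min (gw ip) K := hGeq ip
      have hGi : G (i : ℕ) = min (gw i) K := hGeq i
      have ha1 : min (gv i) K ≤ G ((i : ℕ) - r) + ε := by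
        rw [hGm]
        calc min (gv i) K ≤ min (gw im + ε) (K + ε) :=
              min_le_min hup (by linarith)
          _ = min (gw im) K + ε := min_add_add_right _ _ _
      have ha2 : G ((i : ℕ) + r) ≤ min (gv i) K + ε := by
        rw [hGp]
        calc min (gw ip) K ≤ min (gv i + ε) (K + ε) :=
              min_le_min hdn (by linarith)
          _ = min (gv i) K + ε := min_add_add_right _ _ _
      have ha3 : G ((i : ℕ) + r) ≤ G (i : ℕ) := hGanti (by omega)
      have ha4 : G (i : ℕ) ≤ G ((i : ℕ) - r) := hGanti (by omega)
      rw [← hFtrunc (gv i), ← hFtrunc (gw i)]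
      apply hmod
      rw [abs_sub_le_iff, ← hGi]
      constructor <;> linarith
  -- sum up
  have hstep1 : ‖∑ i, F (v i) - ∑ i, F (w i)‖ ≤ ∑ i, ‖F (gv i) - F (gw i)‖ := by
    rw [hsumv, hsumw, ← Finset.sum_sub_distrib]
    exact norm_sum_le _ _
  set Bad : Finset (Fin dd) := univ.filter BadP with hBadDef
  have hstep2 : ∑ i, ‖F (gv i) - F (gw i)‖ ≤ dd * δ + 2*C * Bad.card := by
    calc ∑ i, ‖F (gv i) - F (gw i)‖ ≤ ∑ i, (δ + if BadP i then 2*C else 0) :=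
          Finset.sum_le_sum fun i _ => key i
      _ = dd * δ + ∑ i, (if BadP i then 2*C else 0) := by
          rw [Finset.sum_add_distrib]
          simp [mul_comm]
      _ = dd * δ + 2*C * Bad.card := by
          congr 1
          rw [← Finset.sum_filter, Finset.sum_const, ← hBadDef]
          simp [mul_comm]
  -- card bounds
  set B1 : Finset (Fin dd) := univ.filter fun i => (i : ℕ) < r with hB1
  set B2 : Finset (Fin dd) := univ.filter fun i => dd ≤ (i : ℕ) + r with hB2
  set B3 : Finset (Fin dd) := univ.filter fun i => η < G ((i : ℕ) - r) - G ((i : ℕ) + r) with hB3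
  have hBadSub : Bad ⊆ B1 ∪ B2 ∪ B3 := by
    intro i hi
    simp only [hBadDef, hBadP, mem_filter, mem_univ, true_and] at hi
    simp only [hB1, hB2, hB3, Finset.mem_union, mem_filter, mem_univ, true_and]
    tauto
  have hcardB1 : B1.card ≤ r := by
    have hmaps : ∀ i ∈ B1, (i : ℕ) ∈ Finset.range r := by
      intro i hi
      simp only [hB1, mem_filter, mem_univ, true_and] at hi
      simpa using hi
    have := Finset.card_le_card_of_injOn (fun i : Fin dd => (i : ℕ)) hmaps
      (Fin.val_injective.injOn)
    simpa using this
  have hcardB2 : B2.card ≤ r := by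
    have hmaps : ∀ i ∈ B2, (i : ℕ) ∈ Finset.Ico (dd - r) dd := by
      intro i hi
      simp only [hB2, mem_filter, mem_univ, true_and] at hi
      simp only [Finset.mem_Ico]
      exact ⟨by omega, i.isLt⟩
    have hsub := Finset.card_le_card_of_injOn (fun i : Fin dd => (i : ℕ)) hmaps
      (Fin.val_injective.injOn)
    rw [Nat.card_Ico] at hsub
    omega
  have hgapnn : ∀ j : ℕ, 0 ≤ G (j - r) - G (j + r) := by
    intro j
    have := hGanti (show j - r ≤ j + r by omega)
    linarith
  have htele : ∑ j ∈ Finset.range dd, (G (j - r) - G (j + r)) ≤ (2*r) * K := by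
    have := telescope_sum (fun j => G (j - r)) K (fun j => hG0 _) (fun j => hGK _) dd (2*r)
    calc ∑ j ∈ Finset.range dd, (G (j - r) - G (j + r))
        = ∑ j ∈ Finset.range dd, ((fun j => G (j - r)) j - (fun j => G (j - r)) (j + 2*r)) := by
          apply Finset.sum_congr rfl
          intro j _
          congr 2
          omega
      _ ≤ (2*r) * K := by exact_mod_cast this
  have hcardB3 : (B3.card : ℝ) * η ≤ 2*r*K := by
    have h1 : (B3.card : ℝ) * η = ∑ _i ∈ B3, η := by
      rw [Finset.sum_const]
      simp [mul_comm]
    have h2 : ∑ _i ∈ B3, η ≤ ∑ i ∈ B3, (G ((i : ℕ) - r) - G ((i : ℕ) + r)) := by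
      apply Finset.sum_le_sum
      intro i hi
      simp only [hB3, mem_filter] at hi
      exact hi.2.le
    have h3 : ∑ i ∈ B3, (G ((i : ℕ) - r) - G ((i : ℕ) + r))
        ≤ ∑ j ∈ Finset.range dd, (G (j - r) - G (j + r)) := by
      have himg : ∑ i ∈ B3, (G ((i : ℕ) - r) - G ((i : ℕ) + r))
          = ∑ j ∈ B3.image (fun i : Fin dd => (i : ℕ)), (G (j - r) - G (j + r)) := by
        rw [Finset.sum_image (by intro a _ b _ h; exact Fin.val_injective h)]
      rw [himg]
      apply Finset.sum_le_sum_of_subset_of_nonneg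
      · intro j hj
        simp only [Finset.mem_image] at hj
        obtain ⟨i, _, rfl⟩ := hj
        simp [i.isLt]
      · intro j _ _
        exact hgapnn j
    calc (B3.card : ℝ) * η = ∑ _i ∈ B3, η := h1
      _ ≤ ∑ i ∈ B3, (G ((i : ℕ) - r) - G ((i : ℕ) + r)) := h2
      _ ≤ ∑ j ∈ Finset.range dd, (G (j - r) - G (j + r)) := h3
      _ ≤ (2*r) * K := htele
      _ = 2*r*K := by ring
  have hcardB3' : (B3.card : ℝ) ≤ 2*r*K/η := by
    rw [le_div_iff₀ hη]
    exact hcardB3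
  have hcardBad : (Bad.card : ℝ) ≤ 2*r + 2*r*K/η := by
    have h1 : Bad.card ≤ B1.card + B2.card + B3.card := by
      calc Bad.card ≤ (B1 ∪ B2 ∪ B3).card := Finset.card_le_card hBadSub
        _ ≤ (B1 ∪ B2).card + B3.card := Finset.card_union_le _ _
        _ ≤ B1.card + B2.card + B3.card := by
            have := Finset.card_union_le B1 B2
            omega
    have h2 : (Bad.card : ℝ) ≤ (B1.card : ℝ) + B2.card + B3.card := by exact_mod_cast h1
    have h3 : (B1.card : ℝ) ≤ r := by exact_mod_cast hcardB1
    have h4 : (B2.card : ℝ) ≤ r := by exact_mod_cast hcardB2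
    linarith
  have hfinal : 2*C * (Bad.card : ℝ) ≤ 2*C*(2*r + 2*r*K/η) :=
    mul_le_mul_of_nonneg_left hcardBad (by linarith)
  calc ‖∑ i, F (v i) - ∑ i, F (w i)‖ ≤ ∑ i, ‖F (gv i) - F (gw i)‖ := hstep1
    _ ≤ dd * δ + 2*C * Bad.card := hstep2
    _ ≤ dd * δ + 2*C*(2*r + 2*r*K/η) := by linarith

lemma singVals_nonneg {m : Type*} [Fintype m] [DecidableEq m] (A : Matrix m m ℂ) (i : m) :
    0 ≤ singVals A i := Real.sqrt_nonneg _

lemma eigenvalues_congr {m : ℕ} {M N : Matrix (Fin m) (Fin m) ℂ} (h : M = N)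
    (hM : M.IsHermitian) (hN : N.IsHermitian) : hM.eigenvalues = hN.eigenvalues := by
  subst h; rfl

lemma singVals_neg {m : ℕ} (Z : Matrix (Fin m) (Fin m) ℂ) : singVals (-Z) = singVals Z := by
  funext i
  unfold singVals
  congr 1
  exact congrFun (eigenvalues_congr (by simp) _ _) i

lemma count_small_tendsto (d : ℕ → ℕ) (hd : StrictMono d)
    (Z : ∀ n, Matrix (Fin (d n)) (Fin (d n)) ℂ) (hZ : ZeroDistr d Z) (ε : ℝ) (hε : 0 < ε) :
    Tendsto (fun n => ((univ.filter fun i => ε < singVals (Z n) i).card : ℝ) / d n)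
      atTop (𝓝 0) := by
  set G : ℝ → ℝ := fun x => max 0 (1 - |x|/ε) with hGdef
  have hGcont : Continuous G := continuous_const.max ((continuous_const.sub (continuous_abs.div_const ε)))
  have hG1 : ∀ x, G x ≤ 1 := by
    intro x
    apply max_le (by norm_num)
    have : 0 ≤ |x|/ε := div_nonneg (abs_nonneg x) hε.le
    linarith
  have hG0' : ∀ x, 0 ≤ G x := fun x => le_max_left _ _
  have hGzero : ∀ x : ℝ, ε ≤ |x| → G x = 0 := by
    intro x hx
    apply max_eq_left
    have : 1 ≤ |x|/ε := (le_div_iff₀ hε).mpr (by linarith)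
    linarith
  have hGsupp : HasCompactSupport G := by
    apply HasCompactSupport.intro (isCompact_Icc (a := -ε) (b := ε))
    intro x hx
    simp only [Set.mem_Icc, not_and_or, not_le] at hx
    apply hGzero
    rcases hx with h | h
    · rw [abs_of_nonpos (by linarith)]; linarith
    · rw [abs_of_pos (by linarith)]; linarith
  set Fc : ℝ → ℂ := fun x => ((G x : ℝ) : ℂ) with hFcdef
  have h1 := hZ Fc (Complex.continuous_ofReal.comp hGcont)
    (hGsupp.comp_left (g := Complex.ofReal) Complex.ofReal_zero)
  have heqfun : (fun n => (d n : ℂ)⁻¹ * ∑ i, Fc (singVals (Z n) i))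
      = fun n => ((( (d n : ℝ)⁻¹ * ∑ i, G (singVals (Z n) i)) : ℝ) : ℂ) := by
    funext n
    push_cast
    ring
  rw [heqfun] at h1
  have hFc0 : Fc 0 = ((1 : ℝ) : ℂ) := by
    simp [hFcdef, hGdef]
  rw [hFc0] at h1
  have h2 : Tendsto (fun n => (d n : ℝ)⁻¹ * ∑ i, G (singVals (Z n) i)) atTop (𝓝 1) := by
    have hcont := (Complex.continuous_re.tendsto _).comp h1
    have heq2 : (Complex.re ∘ fun n => ((((d n : ℝ)⁻¹ * ∑ i, G (singVals (Z n) i)) : ℝ) : ℂ))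
        = fun n => (d n : ℝ)⁻¹ * ∑ i, G (singVals (Z n) i) := by
      funext n; exact Complex.ofReal_re _
    rw [heq2] at hcont
    simpa using hcont
  have h3 : Tendsto (fun n => 1 - (d n : ℝ)⁻¹ * ∑ i, G (singVals (Z n) i)) atTop (𝓝 0) := by
    have := tendsto_const_nhds (x := (1:ℝ)) (f := atTop (α := ℕ)) |>.sub h2
    simpa using this
  apply squeeze_zero' ?_ ?_ h3
  · filter_upwards with n
    positivity
  · filter_upwards [Filter.eventually_atTop.mpr ⟨1, fun n hn => hn⟩] with n hn
    have hdn : 0 < (d n : ℝ) := by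
      have h7 : n ≤ d n := hd.le_apply
      have h8 : 1 ≤ d n := le_trans hn h7
      exact_mod_cast Nat.lt_of_lt_of_le Nat.zero_lt_one h8
    -- r n ≤ d n - ∑ G
    have hcard : ((univ.filter fun i => ε < singVals (Z n) i).card : ℝ)
        ≤ (d n : ℝ) - ∑ i, G (singVals (Z n) i) := by
      have hbig : ∀ i ∈ (univ.filter fun i => ε < singVals (Z n) i),
          (1 : ℝ) - G (singVals (Z n) i) = 1 := by
        intro i hi
        simp only [mem_filter, mem_univ, true_and] at hi
        rw [hGzero _ (by rw [abs_of_nonneg (singVals_nonneg _ _)]; exact hi.le)]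
        ring
      have h5 : ((univ.filter fun i => ε < singVals (Z n) i).card : ℝ)
          = ∑ i ∈ (univ.filter fun i => ε < singVals (Z n) i), (1 - G (singVals (Z n) i)) := by
        rw [Finset.sum_congr rfl hbig]
        simp
      rw [h5]
      have h6 : ∑ i ∈ (univ.filter fun i => ε < singVals (Z n) i), (1 - G (singVals (Z n) i))
          ≤ ∑ i : Fin (d n), (1 - G (singVals (Z n) i)) :=
        Finset.sum_le_sum_of_subset_of_nonneg (Finset.subset_univ _)
          (fun i _ _ => by linarith [hG1 (singVals (Z n) i)])
      calc _ ≤ ∑ i : Fin (d n), (1 - G (singVals (Z n) i)) := h6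
        _ = (d n : ℝ) - ∑ i, G (singVals (Z n) i) := by
            rw [Finset.sum_sub_distrib]
            simp
    rw [div_le_iff₀ hdn]
    have : (1 - (d n : ℝ)⁻¹ * ∑ i, G (singVals (Z n) i)) * (d n)
        = (d n : ℝ) - ∑ i, G (singVals (Z n) i) := by
      field_simp
    rw [this]
    exact hcard


/-- if `{A}ₙ ~σ ψ` and `{Z}ₙ ~σ 0`, then `{A + Z}ₙ ~σ ψ`. -/
theorem singular_value_distribution_add_zero_distributed {t : ℕ}
    (d : ℕ → ℕ) (hd : StrictMono d)
    (A Z : ∀ n, Matrix (Fin (d n)) (Fin (d n)) ℂ)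
    (D : Set (Fin t → ℝ)) (hD : MeasurableSet D)
    (hD0 : 0 < volume D) (hDfin : volume D < ⊤)
    (ψ : (Fin t → ℝ) → ℂ) (hψ : Measurable ψ)
    (hA : HasSingValDistr d A D ψ) (hZ : ZeroDistr d Z) :
    HasSingValDistr d (fun n => A n + Z n) D ψ := by
  intro F hFcont hFsupp
  have hA' := hA F hFcont hFsupp
  set S1 : ℕ → ℂ := fun n => (d n : ℂ)⁻¹ * ∑ i, F (singVals (A n + Z n) i) with hS1
  set S2 : ℕ → ℂ := fun n => (d n : ℂ)⁻¹ * ∑ i, F (singVals (A n) i) with hS2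
  suffices hdiff : Tendsto (fun n => S1 n - S2 n) atTop (𝓝 0) by
    have hsum := hA'.add hdiff
    have heq : (fun n => S2 n + (S1 n - S2 n)) = S1 := by funext n; ring
    rw [heq] at hsum
    simpa using hsum
  -- bound C on ‖F‖
  obtain ⟨C, hC⟩ := hFsupp.exists_bound_of_continuous hFcont
  have hC0 : 0 ≤ C := le_trans (norm_nonneg _) (hC 0)
  -- K beyond which F vanishes
  obtain ⟨K0, hK0⟩ := hFsupp.isBounded.subset_closedBall 0
  set K : ℝ := max K0 0 + 1 with hKdef
  have hKpos : 0 < K := by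
    have : (0:ℝ) ≤ max K0 0 := le_max_right _ _
    linarith
  have hFK : ∀ x : ℝ, K ≤ x → F x = 0 := by
    intro x hx
    apply image_eq_zero_of_notMem_tsupport
    intro hmem
    have := hK0 hmem
    simp only [Metric.mem_closedBall, Real.dist_eq, sub_zero] at this
    have h1 : K0 ≤ max K0 0 := le_max_left _ _
    have h2 : x ≤ K0 := le_trans (le_abs_self x) this
    linarith
  -- uniform continuity
  have hUC : UniformContinuous F := hFsupp.uniformContinuous_of_continuous hFcont
  rw [Metric.uniformContinuous_iff] at hUC
  rw [NormedAddCommGroup.tendsto_nhds_zero]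
  intro δ' hδ'
  obtain ⟨η₀, hη₀pos, hη₀⟩ := hUC (δ'/2) (by positivity)
  set ε : ℝ := η₀/4 with hεdef
  set η : ℝ := η₀/4 with hηdef
  have hεpos : 0 < ε := by positivity
  have hηpos : 0 < η := by positivity
  have hmod : ∀ x y : ℝ, |x - y| ≤ 2*ε + η → ‖F x - F y‖ ≤ δ'/2 := by
    intro x y hxy
    have hdist : dist x y < η₀ := by
      rw [Real.dist_eq]
      have : 2*ε + η < η₀ := by rw [hεdef, hηdef]; linarith
      linarith
    have := hη₀ hdist
    rw [dist_eq_norm] at this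
    exact this.le
  set r : ℕ → ℕ := fun n => (univ.filter fun i => ε < singVals (Z n) i).card with hrdef
  have hr0 : Tendsto (fun n => (r n : ℝ) / d n) atTop (𝓝 0) :=
    count_small_tendsto d hd Z hZ ε hεpos
  set B : ℝ := 2*C*(2 + 2*K/η) with hBdef
  have hB0 : 0 ≤ B := by
    have : 0 ≤ 2*K/η := by positivity
    have : (0:ℝ) ≤ 2 + 2*K/η := by linarith
    positivity
  -- pointwise bound
  have hbound : ∀ n, 1 ≤ d n → ‖S1 n - S2 n‖ ≤ δ'/2 + B * ((r n : ℝ) / d n) := by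
    intro n hdn
    have hdpos : (0:ℝ) < d n := by exact_mod_cast hdn
    have hcount1 : ∀ c : ℝ, 0 ≤ c →
        (univ.filter fun i => c + ε < singVals (A n + Z n) i).card ≤
          (univ.filter fun i => c < singVals (A n) i).card + r n := by
      intro c hc
      exact sv_count_add (A n) (Z n) c ε hc hεpos.le
    have hcount2 : ∀ c : ℝ, 0 ≤ c →
        (univ.filter fun i => c + ε < singVals (A n) i).card ≤
          (univ.filter fun i => c < singVals (A n + Z n) i).card + r n := by
      intro c hc
      have h := sv_count_add (A n + Z n) (-(Z n)) c ε hc hεpos.le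
      rw [show A n + Z n + -(Z n) = A n from add_neg_cancel_right _ _, singVals_neg] at h
      exact h
    have hkey := key_estimate (d n) (r n) (singVals (A n + Z n)) (singVals (A n))
      (singVals_nonneg _) (singVals_nonneg _) ε K η (δ'/2) C hεpos hKpos hηpos
      (by positivity) hC0 F hFK hC hmod hcount1 hcount2
    have hnorm : ‖S1 n - S2 n‖ = (d n : ℝ)⁻¹ *
        ‖∑ i, F (singVals (A n + Z n) i) - ∑ i, F (singVals (A n) i)‖ := by
      rw [hS1, hS2, ← mul_sub, norm_mul, norm_inv, Complex.norm_natCast]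
    rw [hnorm]
    calc (d n : ℝ)⁻¹ * ‖∑ i, F (singVals (A n + Z n) i) - ∑ i, F (singVals (A n) i)‖
        ≤ (d n : ℝ)⁻¹ * ((d n) * (δ'/2) + 2*C*(2*(r n) + 2*(r n)*K/η)) := by
          apply mul_le_mul_of_nonneg_left hkey (by positivity)
      _ = δ'/2 + B * ((r n : ℝ) / d n) := by
          rw [hBdef]
          field_simp
  -- conclude
  have hev1 : ∀ᶠ n in atTop, 1 ≤ d n := by
    filter_upwards [Filter.eventually_ge_atTop 1] with n hn
    exact le_trans hn hd.le_apply
  have hev2 : ∀ᶠ n in atTop, B * ((r n : ℝ) / d n) < δ'/2 := by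
    have htend : Tendsto (fun n => B * ((r n : ℝ) / d n)) atTop (𝓝 0) := by
      simpa using hr0.const_mul B
    exact htend.eventually_lt_const (by positivity)
  filter_upwards [hev1, hev2] with n h1 h2
  calc ‖S1 n - S2 n‖ ≤ δ'/2 + B * ((r n : ℝ) / d n) := hbound n h1
    _ < δ'/2 + δ'/2 := by linarith
    _ = δ' := by ring
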